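/- arXiv:1607.01575 — 2 statements merged into one kernel-verified Lean document; each statement's English description precedes it below -/
import Mathlib

section
/- Rotation of the induced voltage along the steady-state flow. Fix ω0 ∈ ℝ and define the induced voltage v_ind(θ, i) = ω0·(L(θ)·𝒿ᵀ + 𝒿·L(θ))·i for θ ∈ ℝ, i ∈ ℝ⁵. Then for all θ ∈ ℝ and i ∈ ℝ⁵, (∂v_ind/∂θ)(θ, i)·ω0 + Dv_ind(θ, i)[ω0·𝒿·i] = ω0·𝒿·v_ind(θ, i), where Dv_ind(θ, i)[w] denotes the derivative of v_ind in its second argument applied to w (equal to ω0·(L(θ)·𝒿ᵀ + 𝒿·L(θ))·w by linearity). -/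
noncomputable section
open Matrix

/-- Vectors in ℝ². -/
abbrev V2 : Type := Fin 2 → ℝ
/-- 2×2 real matrices. -/
abbrev M2 : Type := Matrix (Fin 2) (Fin 2) ℝ

/-- The 90° rotation matrix `j`. -/
def j2 : M2 := !![0, -1; 1, 0]

/-- The rotation matrix `R(θ)`. -/
def Rot (θ : ℝ) : M2 := !![Real.cos θ, -Real.sin θ; Real.sin θ, Real.cos θ]

/-- The unit vector `r(θ) = (cos θ, sin θ)`. -/
def rvec (θ : ℝ) : V2 := ![Real.cos θ, Real.sin θ]

/-- The Euclidean norm on ℝ². -/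
def enorm2 (w : V2) : ℝ := Real.sqrt (w 0 ^ 2 + w 1 ^ 2)
/-- Index type for the 5 machine windings: 2 stator + 3 rotor (f, d, q). -/
abbrev I5 : Type := Fin 2 ⊕ Fin 3
/-- Vectors in ℝ⁵ (machine currents/voltages). -/
abbrev V5 : Type := I5 → ℝ

/-- The 5×5 matrix 𝒿 = diag(j, 0₃ₓ₃). -/
def jj : Matrix I5 I5 ℝ := Matrix.fromBlocks j2 0 0 0

/-- Parameters of a synchronous machine. -/
structure Machine where
  /-- stator winding resistance -/
  rs : ℝ
  /-- excitation winding resistance -/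
  rf : ℝ
  /-- d-axis damper winding resistance -/
  rd : ℝ
  /-- q-axis damper winding resistance -/
  rq : ℝ
  /-- stator winding inductance -/
  ls : ℝ
  /-- rotor saliency -/
  lsa : ℝ
  /-- excitation winding inductance -/
  lf : ℝ
  /-- d-axis damper winding inductance -/
  ld : ℝ
  /-- q-axis damper winding inductance -/
  lq : ℝ
  /-- mutual inductance of excitation and damper winding -/
  lfd : ℝ
  /-- stator–excitation mutual inductance -/
  lsf : ℝ
  /-- stator–d-damper mutual inductance -/
  lsd : ℝ
  /-- stator–q-damper mutual inductance -/
  lsq : ℝ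
  /-- rotor inertia -/
  m : ℝ
  /-- rotor damping -/
  d : ℝ
  rs_pos : 0 < rs
  rf_pos : 0 < rf
  rd_pos : 0 < rd
  rq_pos : 0 < rq
  ls_pos : 0 < ls
  lsa_nonneg : 0 ≤ lsa
  lf_pos : 0 < lf
  ld_pos : 0 < ld
  lq_pos : 0 < lq
  lfd_pos : 0 < lfd
  lsf_pos : 0 < lsf
  lsd_pos : 0 < lsd
  lsq_pos : 0 < lsq
  m_pos : 0 < m
  d_pos : 0 < d

namespace Machine

/-- Stator inductance matrix L_s(θ). -/
def Ls (mc : Machine) (θ : ℝ) : M2 :=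
  mc.ls • (1 : M2) + Rot (2 * θ) * !![mc.lsa, 0; 0, -mc.lsa]

/-- Mutual inductance matrix L_m(θ). -/
def Lm (mc : Machine) (θ : ℝ) : Matrix (Fin 2) (Fin 3) ℝ :=
  Rot θ * !![mc.lsf, mc.lsd, 0; 0, 0, -mc.lsq]

/-- Rotor inductance matrix L_r. -/
def Lr (mc : Machine) : Matrix (Fin 3) (Fin 3) ℝ :=
  !![mc.lf, mc.lfd, 0; mc.lfd, mc.ld, 0; 0, 0, mc.lq]

/-- The 5×5 machine inductance matrix L(θ). -/
def Lmat (mc : Machine) (θ : ℝ) : Matrix I5 I5 ℝ :=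
  Matrix.fromBlocks (mc.Ls θ) (mc.Lm θ) (mc.Lm θ)ᵀ mc.Lr

/-- The 5×5 machine resistance matrix R = diag(r_s I₂, r_f, r_d, r_q). -/
def Rmat (mc : Machine) : Matrix I5 I5 ℝ :=
  Matrix.fromBlocks (mc.rs • (1 : M2)) 0 0 (Matrix.diagonal ![mc.rf, mc.rd, mc.rq])

/-- Electrical torque τ_e = ½ iᵀ(L(θ)𝒿 + 𝒿ᵀL(θ))i. -/
def torque (mc : Machine) (θ : ℝ) (i : V5) : ℝ :=
  (1 / 2) * (i ⬝ᵥ ((mc.Lmat θ * jj + jjᵀ * mc.Lmat θ) *ᵥ i))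

/-- Induced voltage v_ind = ω(L(θ)𝒿ᵀ + 𝒿L(θ))i. -/
def vind (mc : Machine) (ω θ : ℝ) (i : V5) : V5 :=
  ω • ((mc.Lmat θ * jjᵀ + jj * mc.Lmat θ) *ᵥ i)

/-- Stator impedance Z_s(θ) = r_s I₂ + ω₀ j L_s(θ). -/
def Zs (mc : Machine) (ω0 θ : ℝ) : M2 :=
  mc.rs • (1 : M2) + ω0 • (j2 * mc.Ls θ)

/-- The open-circuit stator voltage error ν(θ) = v − Z_s(θ) i_s. -/
def nu (mc : Machine) (ω0 θ : ℝ) (v is : V2) : V2 :=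
  v - mc.Zs ω0 θ *ᵥ is

end Machine

/-!
`L(θ) = P(θ) L(0) P(θ)ᵀ` with `P(θ) = diag(R(θ), I₃)`, and `P' = 𝒿 P`; hence
`L' = L 𝒿ᵀ + 𝒿 L =: B`, so `v_ind = ω₀ B i` and `B' = B 𝒿ᵀ + 𝒿 B`. The claim is then the identity
`(B 𝒿ᵀ + 𝒿 B) + B 𝒿 = 𝒿 B`, which holds because `𝒿ᵀ = -𝒿`.
-/

section HasMatrixDerivAt

variable {𝕜 : Type*} [NontriviallyNormedField 𝕜] {l m n : Type*}

def HasMatrixDerivAt (A : 𝕜 → Matrix l m 𝕜) (A' : Matrix l m 𝕜) (x : 𝕜) : Prop :=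
  ∀ a b, HasDerivAt (fun y => A y a b) (A' a b) x

variable {A B : 𝕜 → Matrix l m 𝕜} {A' B' : Matrix l m 𝕜} {x : 𝕜}

theorem HasMatrixDerivAt.add (hA : HasMatrixDerivAt A A' x) (hB : HasMatrixDerivAt B B' x) :
    HasMatrixDerivAt (fun y => A y + B y) (A' + B') x :=
  fun a b => (hA a b).add (hB a b)

theorem HasMatrixDerivAt.transpose (hA : HasMatrixDerivAt A A' x) :
    HasMatrixDerivAt (fun y => (A y)ᵀ) A'ᵀ x :=
  fun a b => hA b a

theorem HasMatrixDerivAt.mul [Fintype m] {C : 𝕜 → Matrix m n 𝕜} {C' : Matrix m n 𝕜}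
    (hA : HasMatrixDerivAt A A' x) (hC : HasMatrixDerivAt C C' x) :
    HasMatrixDerivAt (fun y => A y * C y) (A' * C x + A x * C') x := by
  intro a c
  simp only [Matrix.add_apply, Matrix.mul_apply, ← Finset.sum_add_distrib]
  exact HasDerivAt.fun_sum fun b _ => (hA a b).mul (hC b c)

theorem hasMatrixDerivAt_const (M : Matrix l m 𝕜) : HasMatrixDerivAt (fun _ => M) 0 x :=
  fun a b => hasDerivAt_const x (M a b)

theorem HasMatrixDerivAt.const_mul [Fintype l] (M : Matrix n l 𝕜) (hA : HasMatrixDerivAt A A' x) :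
    HasMatrixDerivAt (fun y => M * A y) (M * A') x := by
  simpa using (hasMatrixDerivAt_const M).mul hA

theorem HasMatrixDerivAt.mul_const [Fintype l] {C : 𝕜 → Matrix n l 𝕜} {C' : Matrix n l 𝕜}
    (M : Matrix l m 𝕜) (hC : HasMatrixDerivAt C C' x) :
    HasMatrixDerivAt (fun y => C y * M) (C' * M) x := by
  simpa using hC.mul (hasMatrixDerivAt_const M)

theorem HasMatrixDerivAt.mulVec [Fintype m] (hA : HasMatrixDerivAt A A' x) (v : m → 𝕜) (a : l) :
    HasDerivAt (fun y => (A y *ᵥ v) a) ((A' *ᵥ v) a) x := by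
  simp only [Matrix.mulVec, dotProduct]
  exact HasDerivAt.fun_sum fun b _ => (hA a b).mul_const (v b)

theorem HasMatrixDerivAt.fromBlocks {o : Type*} {A : 𝕜 → Matrix n l 𝕜} {A' : Matrix n l 𝕜}
    {B : 𝕜 → Matrix n m 𝕜} {B' : Matrix n m 𝕜} {C : 𝕜 → Matrix o l 𝕜} {C' : Matrix o l 𝕜}
    {D : 𝕜 → Matrix o m 𝕜} {D' : Matrix o m 𝕜} (hA : HasMatrixDerivAt A A' x)
    (hB : HasMatrixDerivAt B B' x) (hC : HasMatrixDerivAt C C' x) (hD : HasMatrixDerivAt D D' x) :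
    HasMatrixDerivAt (fun y => Matrix.fromBlocks (A y) (B y) (C y) (D y))
      (Matrix.fromBlocks A' B' C' D') x := by
  rintro (a | a) (b | b)
  exacts [hA a b, hB a b, hC a b, hD a b]

theorem HasMatrixDerivAt.mul_mul_transpose [Fintype m] {P : 𝕜 → Matrix n m 𝕜} {P' : Matrix n m 𝕜}
    (hP : HasMatrixDerivAt P P' x) (M : Matrix m m 𝕜) :
    HasMatrixDerivAt (fun y => P y * M * (P y)ᵀ) (P' * M * (P x)ᵀ + P x * M * P'ᵀ) x :=
  (hP.mul_const M).mul hP.transpose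

end HasMatrixDerivAt

theorem j2_transpose : j2ᵀ = -j2 := by
  ext a b
  fin_cases a <;> fin_cases b <;> simp [j2]

theorem jj_transpose : jjᵀ = -jj := by
  simp [jj, Matrix.fromBlocks_transpose, j2_transpose, Matrix.fromBlocks_neg]

theorem Rot_zero : Rot 0 = 1 := by
  ext a b
  fin_cases a <;> fin_cases b <;> simp [Rot]

theorem hasMatrixDerivAt_Rot (θ : ℝ) : HasMatrixDerivAt Rot (j2 * Rot θ) θ := by
  intro a b
  fin_cases a <;> fin_cases b
  · simpa [Rot, j2] using Real.hasDerivAt_cos θ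
  · simpa [Rot, j2] using (Real.hasDerivAt_sin θ).fun_neg
  · simpa [Rot, j2] using Real.hasDerivAt_sin θ
  · simpa [Rot, j2] using Real.hasDerivAt_cos θ

def rotorFrame (θ : ℝ) : Matrix I5 I5 ℝ := Matrix.fromBlocks (Rot θ) 0 0 1

theorem hasMatrixDerivAt_rotorFrame (θ : ℝ) :
    HasMatrixDerivAt rotorFrame (jj * rotorFrame θ) θ := by
  unfold rotorFrame
  convert (hasMatrixDerivAt_Rot θ).fromBlocks (hasMatrixDerivAt_const 0) (hasMatrixDerivAt_const 0)
    (hasMatrixDerivAt_const 1) using 1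
  simp [jj, Matrix.fromBlocks_multiply]

namespace Machine

theorem Lm_eq_Rot_mul (mc : Machine) (θ : ℝ) : mc.Lm θ = Rot θ * mc.Lm 0 := by
  simp [Lm, Rot_zero]

theorem Ls_eq_Rot_conj (mc : Machine) (θ : ℝ) : mc.Ls θ = Rot θ * mc.Ls 0 * (Rot θ)ᵀ := by
  ext a b
  fin_cases a <;> fin_cases b <;>
    simp [Ls, Rot, Matrix.mul_apply, Matrix.vecMul, dotProduct, Fin.sum_univ_two,
      Real.cos_two_mul', Real.sin_two_mul]
  · linear_combination (-mc.ls) * Real.sin_sq_add_cos_sq θ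
  · ring
  · ring
  · linear_combination (-mc.ls) * Real.sin_sq_add_cos_sq θ

theorem Lmat_eq_rotorFrame_conj (mc : Machine) (θ : ℝ) :
    mc.Lmat θ = rotorFrame θ * mc.Lmat 0 * (rotorFrame θ)ᵀ := by
  simp only [Lmat, rotorFrame, Matrix.fromBlocks_transpose, Matrix.fromBlocks_multiply]
  rw [mc.Ls_eq_Rot_conj θ, mc.Lm_eq_Rot_mul θ]
  simp [Matrix.transpose_mul, Matrix.mul_assoc]

theorem hasMatrixDerivAt_Lmat (mc : Machine) (θ : ℝ) :
    HasMatrixDerivAt mc.Lmat (mc.Lmat θ * jjᵀ + jj * mc.Lmat θ) θ := by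
  have h := (hasMatrixDerivAt_rotorFrame θ).mul_mul_transpose (mc.Lmat 0)
  simp only [← mc.Lmat_eq_rotorFrame_conj] at h
  convert h using 1
  simp only [mc.Lmat_eq_rotorFrame_conj θ, Matrix.transpose_mul, Matrix.mul_assoc]
  abel

end Machine

/-- The induced voltage v_ind(θ,i) = ω₀(L(θ)𝒿ᵀ + 𝒿L(θ))i rotates
along the steady-state flow: (∂v_ind/∂θ)·ω₀ + Dv_ind(θ,i)[ω₀𝒿i] = ω₀ 𝒿 v_ind(θ,i),
where by linearity Dv_ind(θ,i)[w] = ω₀(L(θ)𝒿ᵀ + 𝒿L(θ))w. -/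
theorem vind_rotates_along_flow (mc : Machine) (ω0 θ : ℝ) (i : V5) :
    (fun a => deriv (fun φ => mc.vind ω0 φ i a) θ * ω0)
      + ω0 • ((mc.Lmat θ * jjᵀ + jj * mc.Lmat θ) *ᵥ (ω0 • (jj *ᵥ i)))
      = ω0 • (jj *ᵥ mc.vind ω0 θ i) := by
  set B := mc.Lmat θ * jjᵀ + jj * mc.Lmat θ
  have hB : HasMatrixDerivAt (fun φ => mc.Lmat φ * jjᵀ + jj * mc.Lmat φ) (B * jjᵀ + jj * B) θ :=
    ((mc.hasMatrixDerivAt_Lmat θ).mul_const jjᵀ).add ((mc.hasMatrixDerivAt_Lmat θ).const_mul jj)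
  have hderiv : (fun a => deriv (fun φ => mc.vind ω0 φ i a) θ * ω0)
      = (ω0 * ω0) • ((B * jjᵀ + jj * B) *ᵥ i) := by
    funext a
    have h : HasDerivAt (fun φ => mc.vind ω0 φ i a) (ω0 * ((B * jjᵀ + jj * B) *ᵥ i) a) θ :=
      (hB.mulVec i a).const_mul ω0
    rw [h.deriv, Pi.smul_apply, smul_eq_mul]
    ring
  have key : (B * jjᵀ + jj * B) + B * jj = jj * B := by
    rw [jj_transpose]
    noncomm_ring
  rw [hderiv, Machine.vind, Matrix.mulVec_smul, Matrix.mulVec_smul, Matrix.mulVec_mulVec,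
    Matrix.mulVec_mulVec, smul_smul, smul_smul, ← smul_add, ← Matrix.add_mulVec, key]
end
end

section
/- Consistency of the impedance load model with the synchronous steady state. Let g : ℝ_{≥0} → ℝ and b : ℝ_{≥0} → ℝ and define i_l(w) = (g(‖w‖)·I₂ + b(‖w‖)·j)·w for w ∈ ℝ². Then for every ω0 ∈ ℝ and every w0 ∈ ℝ², the curve t ↦ i_l(R(ω0 t)·w0) is differentiable and satisfies d/dt i_l(R(ω0 t)·w0) = ω0·j·i_l(R(ω0 t)·w0) for all t ∈ ℝ. -/
noncomputable section
open Matrix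

/-!
Since `j` commutes with every rotation and rotations preserve the norm, the load map is
rotation-equivariant: `i_l(R(θ) w) = R(θ) i_l(w)`. The claim then reduces to the
derivative of the rotating vector `R(ω₀ t) v = cos(ω₀ t) v + sin(ω₀ t) j v`, which is
`ω₀ j R(ω₀ t) v` because `j² = -1`.
-/

lemma j2_mulVec_j2_mulVec (v : V2) : j2 *ᵥ (j2 *ᵥ v) = -v := by
  ext i; fin_cases i <;> simp [j2, mulVec, dotProduct, Fin.sum_univ_two]

lemma rot_mulVec (θ : ℝ) (v : V2) :
    Rot θ *ᵥ v = Real.cos θ • v + Real.sin θ • (j2 *ᵥ v) := by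
  ext i; fin_cases i <;> simp [Rot, j2, mulVec, dotProduct, Fin.sum_univ_two, mul_comm, add_comm]

lemma j2_mulVec_rot_mulVec (θ : ℝ) (v : V2) :
    j2 *ᵥ (Rot θ *ᵥ v) = Rot θ *ᵥ (j2 *ᵥ v) := by
  simp only [rot_mulVec, mulVec_add, mulVec_smul]

lemma enorm2_rot_mulVec (θ : ℝ) (v : V2) : enorm2 (Rot θ *ᵥ v) = enorm2 v := by
  simp only [enorm2, Rot, mulVec, dotProduct, Fin.sum_univ_two]
  congr 1
  simp only [of_apply, cons_val', cons_val_zero, cons_val_fin_one, cons_val_one, neg_mul]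
  linear_combination (v 0 ^ 2 + v 1 ^ 2) * Real.cos_sq_add_sin_sq θ

lemma hasDerivAt_rot_mul_mulVec (ω : ℝ) (v : V2) (t : ℝ) :
    HasDerivAt (fun s => Rot (ω * s) *ᵥ v) (ω • (j2 *ᵥ (Rot (ω * t) *ᵥ v))) t := by
  have hθ : HasDerivAt (fun s => ω * s) ω t := by simpa using (hasDerivAt_id t).const_mul ω
  have hcos := ((Real.hasDerivAt_cos _).comp t hθ).smul_const v
  have hsin := ((Real.hasDerivAt_sin _).comp t hθ).smul_const (j2 *ᵥ v)
  rw [show (fun s => Rot (ω * s) *ᵥ v) = _ from funext fun s => rot_mulVec (ω * s) v]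
  refine (hcos.add hsin).congr_deriv ?_
  rw [rot_mulVec, mulVec_add, mulVec_smul, mulVec_smul, j2_mulVec_j2_mulVec]
  module

lemma il_rot_mulVec (g b : ℝ → ℝ) (il : V2 → V2)
    (hil : ∀ w, il w = g (enorm2 w) • w + b (enorm2 w) • (j2 *ᵥ w)) (θ : ℝ) (w : V2) :
    il (Rot θ *ᵥ w) = Rot θ *ᵥ il w := by
  rw [hil, hil, enorm2_rot_mulVec, j2_mulVec_rot_mulVec, mulVec_add, mulVec_smul, mulVec_smul]

/-- Consistency of the impedance load model with the synchronous
steady state: along any synchronous trajectory t ↦ R(ω₀t)w₀, the load current is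
differentiable and satisfies d/dt i_l(R(ω₀t)w₀) = ω₀ j i_l(R(ω₀t)w₀). -/
theorem impedance_load_consistency (g b : ℝ → ℝ) (il : V2 → V2)
    (hil : ∀ w, il w = g (enorm2 w) • w + b (enorm2 w) • (j2 *ᵥ w))
    (ω0 : ℝ) (w0 : V2) (t : ℝ) :
    HasDerivAt (fun s => il (Rot (ω0 * s) *ᵥ w0))
      (ω0 • (j2 *ᵥ il (Rot (ω0 * t) *ᵥ w0))) t := by
  simp only [il_rot_mulVec g b il hil]
  exact hasDerivAt_rot_mul_mulVec ω0 (il w0) t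
end
end
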